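/- arXiv:2104.09094 — 5 statements merged into one kernel-verified Lean document; each statement's English description precedes it below -/
import Mathlib

section
/- Let G be a finitely generated group and H a subgroup of finite index. Then d(H) - 1 ≤ |G : H| · (d(G) - 1), where d(·) denotes the minimal number of generators. -/
/-!
By Schreier's lemma, if `R ∋ 1` is a right transversal of `H` and `S` generates `G`, then `H` is
generated by the `|G : H| · |S|` elements `r s (‾(r s))⁻¹` (`r ∈ R`, `s ∈ S`, `‾g ∈ R` the
representative of `H g`), and such a generator is trivial when `r s ∈ R`.
Grow `R` from `{1}` along the Schreier graph: while `R` misses a coset, connectivity gives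
`r ∈ R`, `s ∈ S` such that `H r s` or `H r s⁻¹` is missed, and adding `r s` resp. `r s⁻¹` to `R`
creates a new pair `(r', s)` with `r', r' s ∈ R`. The final transversal has at least
`|G : H| - 1` trivial Schreier generators, so for `|S| = d(G)` at most `|G : H| (d(G) - 1) + 1`
nontrivial ones remain.
-/

/-- The minimal number of generators of a group. -/
noncomputable def minGens (G : Type*) [Group G] : ℕ :=
  sInf {n | ∃ S : Finset G, S.card = n ∧ Subgroup.closure (S : Set G) = ⊤}

open Finset Subgroup QuotientGroup Pointwise

theorem minGens_le_card {G : Type*} [Group G] {S : Finset G} (hS : closure (S : Set G) = ⊤) :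
    minGens G ≤ #S :=
  Nat.sInf_le ⟨S, rfl, hS⟩

theorem exists_card_eq_minGens {G : Type*} [Group G] (hG : Group.FG G) :
    ∃ S : Finset G, #S = minGens G ∧ closure (S : Set G) = ⊤ := by
  obtain ⟨S, hS⟩ := hG.out
  exact Nat.sInf_mem (s := {n | ∃ S : Finset G, #S = n ∧ closure (S : Set G) = ⊤})
    ⟨#S, S, rfl, hS⟩

namespace Subgroup

variable {G : Type*} [Group G] {H : Subgroup G}

theorem natCard_quotient_rightRel (H : Subgroup G) :
    Nat.card (Quotient (rightRel H)) = H.index :=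
  (Nat.card_congr (quotientRightRelEquivQuotientLeftRel H)).trans H.index_eq_card.symm

theorem mk''_mul_right_of_mk''_eq {x y : G}
    (h : (Quotient.mk'' x : Quotient (rightRel H)) = Quotient.mk'' y) (g : G) :
    (Quotient.mk'' (x * g) : Quotient (rightRel H)) = Quotient.mk'' (y * g) := by
  rw [Quotient.eq'', rightRel_apply] at h ⊢
  simpa [mul_assoc] using h

theorem IsComplement.toRightFun_coe {T : Set G} (hT : IsComplement (H : Set G) T) (t : T) :
    hT.toRightFun t = t :=
  Equiv.ofBijective_symm_apply_apply _ _ t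

theorem exists_mem_mul_notMem_image_mk'' {S : Set G} (hS : closure S = ⊤) {R : Set G}
    (hR1 : (1 : G) ∈ R) (hR : (Quotient.mk'' '' R : Set (Quotient (rightRel H))) ≠ Set.univ) :
    ∃ r ∈ R, ∃ s ∈ S, ∃ g, (g = r * s ∨ g * s = r) ∧
      (Quotient.mk'' g : Quotient (rightRel H)) ∉ Quotient.mk'' '' R := by
  by_contra! hclosed
  refine hR (Set.eq_univ_of_forall fun q => Quotient.inductionOn' q fun g => ?_)
  refine closure_induction_right
    (p := fun x _ => (Quotient.mk'' x : Quotient (rightRel H)) ∈ Quotient.mk'' '' R)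
    ⟨1, hR1, rfl⟩ ?_ ?_ (hS ▸ mem_top g)
  · rintro x - s hs ⟨r, hr, hrx⟩
    rw [← mk''_mul_right_of_mk''_eq hrx]
    exact hclosed r hr s hs _ (Or.inl rfl)
  · rintro x - s hs ⟨r, hr, hrx⟩
    rw [← mk''_mul_right_of_mk''_eq hrx]
    exact hclosed r hr s hs _ (Or.inr (inv_mul_cancel_right r s))

section

variable [DecidableEq G]

def schreierEdges (R S : Finset G) : Finset (G × G) :=
  (R ×ˢ S).filter fun p => p.1 * p.2 ∈ R

theorem schreierEdges_subset_product (R S : Finset G) : schreierEdges R S ⊆ R ×ˢ S :=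
  filter_subset _ _

theorem card_schreierEdges_lt_insert {R S : Finset G} {g r s : G} (hg : g ∉ R) (hr : r ∈ R)
    (hs : s ∈ S) (hgrs : g = r * s ∨ g * s = r) :
    #(schreierEdges R S) < #(schreierEdges (insert g R) S) := by
  have hmono : schreierEdges R S ⊆ schreierEdges (insert g R) S := by
    intro p hp
    simp only [schreierEdges, mem_filter, mem_product, mem_insert] at hp ⊢
    tauto
  obtain ⟨e, he, hnew⟩ : ∃ e ∈ schreierEdges (insert g R) S, e ∉ schreierEdges R S := by
    rcases hgrs with rfl | rfl
    · exact ⟨(r, s), by simp [schreierEdges, hr, hs], by simp [schreierEdges, hg]⟩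
    · exact ⟨(g, s), by simp [schreierEdges, hr, hs], by simp [schreierEdges, hg]⟩
  exact card_lt_card ⟨hmono, fun h => hnew (h he)⟩

theorem exists_injOn_mk''_le_card_schreierEdges (H : Subgroup G) {S : Finset G}
    (hS : closure (S : Set G) = ⊤) {k : ℕ} (hk : k < H.index) :
    ∃ R : Finset G, 1 ∈ R ∧ Set.InjOn (Quotient.mk'' : G → Quotient (rightRel H)) R ∧
      #R = k + 1 ∧ k ≤ #(schreierEdges R S) := by
  induction k with
  | zero => exact ⟨{1}, mem_singleton_self 1, by simp, rfl, Nat.zero_le _⟩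
  | succ k ih =>
    obtain ⟨R, hR1, hinj, hcard, hedges⟩ := ih (by omega)
    have hR : (Quotient.mk'' '' R : Set (Quotient (rightRel H))) ≠ Set.univ := by
      intro h
      have := Set.ncard_image_le (f := (Quotient.mk'' : G → Quotient (rightRel H)))
        R.finite_toSet
      rw [h, Set.ncard_univ, natCard_quotient_rightRel, Set.ncard_coe_finset] at this
      omega
    obtain ⟨r, hr, s, hs, g, hgrs, hg⟩ := exists_mem_mul_notMem_image_mk'' hS hR1 hR
    have hgR : g ∉ R := fun h => hg ⟨g, h, rfl⟩
    refine ⟨insert g R, mem_insert_of_mem hR1, ?_, ?_, ?_⟩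
    · rw [coe_insert, Set.injOn_insert hgR]
      exact ⟨hinj, hg⟩
    · rw [card_insert_of_notMem hgR, hcard]
    · have := card_schreierEdges_lt_insert hgR hr hs hgrs
      omega

theorem exists_isComplement_index_sub_one_le_card_schreierEdges (H : Subgroup G)
    [H.FiniteIndex] {S : Finset G} (hS : closure (S : Set G) = ⊤) :
    ∃ R : Finset G, IsComplement (H : Set G) R ∧ 1 ∈ R ∧
      H.index - 1 ≤ #(schreierEdges R S) := by
  have hindex : H.index ≠ 0 := FiniteIndex.index_ne_zero
  have : Finite (Quotient (rightRel H)) :=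
    Nat.finite_of_card_ne_zero (by rwa [natCard_quotient_rightRel])
  obtain ⟨R, hR1, hinj, hcard, hedges⟩ :=
    exists_injOn_mk''_le_card_schreierEdges H hS (k := H.index - 1) (by omega)
  refine ⟨R, isComplement_subgroup_left_iff_bijective.mpr ?_, hR1, hedges⟩
  refine (Set.injOn_iff_injective.mp hinj).bijective_of_nat_card_le ?_
  rw [natCard_quotient_rightRel, Nat.card_coe_set_eq, Set.ncard_coe_finset, hcard]
  omega

noncomputable def schreierGens {R : Finset G} (hR : IsComplement (H : Set G) R)
    (S : Finset G) : Finset H :=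
  (R * S).image fun g => ⟨_, hR.mul_inv_toRightFun_mem g⟩

theorem closure_schreierGens {R S : Finset G} (hR : IsComplement (H : Set G) R) (hR1 : 1 ∈ R)
    (hS : closure (S : Set G) = ⊤) : closure (schreierGens hR S : Set H) = ⊤ :=
  closure_mul_image_eq_top' hR hR1 hS

theorem card_erase_one_schreierGens_add_card_schreierEdges_le {R : Finset G}
    (hR : IsComplement (H : Set G) R) (S : Finset G) :
    #((schreierGens hR S).erase 1) + #(schreierEdges R S) ≤ #R * #S := by
  set F : G → H := fun g => ⟨_, hR.mul_inv_toRightFun_mem g⟩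
  have hF : ∀ p ∈ schreierEdges R S, F (p.1 * p.2) = 1 := by
    intro p hp
    have hmem : p.1 * p.2 ∈ (R : Set G) := (mem_filter.mp hp).2
    ext
    simp [F, hR.toRightFun_coe ⟨_, hmem⟩]
  have hsub : (schreierGens hR S).erase 1 ⊆
      ((R ×ˢ S) \ schreierEdges R S).image fun p => F (p.1 * p.2) := by
    intro x hx
    obtain ⟨hx1, hx⟩ := mem_erase.mp hx
    rw [schreierGens, ← image_mul_product, image_image] at hx
    obtain ⟨p, hp, rfl⟩ := mem_image.mp hx
    exact mem_image_of_mem _ (mem_sdiff.mpr ⟨hp, fun he => hx1 (hF p he)⟩)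
  calc #((schreierGens hR S).erase 1) + #(schreierEdges R S)
      ≤ #((R ×ˢ S) \ schreierEdges R S) + #(schreierEdges R S) :=
        Nat.add_le_add_right ((card_le_card hsub).trans card_image_le) _
    _ = #R * #S := by
        rw [card_sdiff_add_card_eq_card (schreierEdges_subset_product R S), card_product]

end

theorem minGens_add_index_le (H : Subgroup G) [H.FiniteIndex] (hG : Group.FG G) :
    minGens H + H.index ≤ H.index * minGens G + 1 := by
  classical
  obtain ⟨S, hScard, hS⟩ := exists_card_eq_minGens hG
  obtain ⟨R, hR, hR1, hedges⟩ := exists_isComplement_index_sub_one_le_card_schreierEdges H hS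
  have hgens : closure (((schreierGens hR S).erase 1 : Finset H) : Set H) = ⊤ := by
    rw [coe_erase, closure_sdiff_one, closure_schreierGens hR hR1 hS]
  have hRcard : #R = H.index := by simpa using hR.card_right
  have hcount := card_erase_one_schreierGens_add_card_schreierEdges_le hR S
  rw [hRcard, hScard] at hcount
  have hmin := minGens_le_card hgens
  have hindex : H.index ≠ 0 := FiniteIndex.index_ne_zero
  omega

end Subgroup

/-- Schreier's inequality: for a finitely generated group `G` and a finite-index
subgroup `H`, `d(H) - 1 ≤ |G : H| * (d(G) - 1)`. -/
theorem schreier_inequality (G : Type*) [Group G] (hG : Group.FG G)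
    (H : Subgroup G) (hH : H.FiniteIndex) :
    (minGens H : ℤ) - 1 ≤ (H.index : ℤ) * ((minGens G : ℤ) - 1) := by
  have := H.minGens_add_index_le hG
  zify at this
  linarith
end

section
/- Let H be a finite group with a normal subgroup U, and let K_1, …, K_k ≤ U be k distinct normal subgroups of H such that each quotient U/K_i is a chief factor of H (i.e., a minimal normal subgroup of H/K_i contained in U/K_i with no intermediate H-invariant subgroup). If for each i one has K_i ⊉ ∩_{j≠i} K_j, then the diagonal homomorphism U → ∏_{i=1}^k U/K_i induces an isomorphism U/(∩_i K_i) ≅ ∏_{i=1}^k U/K_i. -/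
/-!
Since `U / K i` is a chief factor, the normal subgroup `(⋂_{j ≠ i} K j) ∩ U`, which is not
contained in `K i` by condition C2, supplements `K i` in `U`. So every class in `U / K i` has a
representative lying in all the other `K j`; its diagonal image is the corresponding
single-coordinate vector, and these vectors generate the finite product.
-/

namespace Subgroup

variable {H : Type*} [Group H] {ι : Type*}

def diagonalQuotientMap (U : Subgroup H) (K : ι → Subgroup H) [∀ i, (K i).Normal] :
    U →* Π i, U ⧸ (K i).subgroupOf U :=
  MonoidHom.pi fun i => QuotientGroup.mk' ((K i).subgroupOf U)

theorem ker_diagonalQuotientMap (U : Subgroup H) (K : ι → Subgroup H) [∀ i, (K i).Normal] :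
    (diagonalQuotientMap U K).ker = (⨅ i, K i).subgroupOf U := by
  ext u
  simp [diagonalQuotientMap, MonoidHom.mem_ker, funext_iff, mem_subgroupOf, mem_iInf]

theorem sup_eq_of_chief {U K N : Subgroup H} [K.Normal] [N.Normal] (hKU : K ≤ U)
    (hchief : ∀ Z : Subgroup H, Z.Normal → K < Z → Z < U → False)
    (hNU : N ≤ U) (hNK : ¬ N ≤ K) : N ⊔ K = U := by
  have hlt : K < N ⊔ K := lt_of_le_of_ne le_sup_right fun h => hNK (h ▸ le_sup_left)
  by_contra hne
  exact hchief _ inferInstance hlt (lt_of_le_of_ne (sup_le hNU hKU) hne)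

theorem iInf_compl_inf_not_le {U : Subgroup H} {K : ι → Subgroup H} (hKU : ∀ i, K i < U)
    {i : ι} (hC2 : ¬ (⨅ j ∈ ({i}ᶜ : Set ι), K j) ≤ K i) :
    ¬ (⨅ j ∈ ({i}ᶜ : Set ι), K j) ⊓ U ≤ K i := by
  intro h
  by_cases hother : ∃ j, j ≠ i
  · obtain ⟨j, hj⟩ := hother
    exact hC2 (by rwa [inf_eq_left.mpr ((iInf₂_le j hj).trans (hKU j).le)] at h)
  · push Not at hother
    have hUle : U ≤ ⨅ j ∈ ({i}ᶜ : Set ι), K j := le_iInf₂ fun j hj => absurd (hother j) hj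
    exact (hKU i).not_ge (by rwa [inf_eq_right.mpr hUle] at h)

theorem exists_mk_eq_and_mem_of_ne {U : Subgroup H} [U.Normal] {K : ι → Subgroup H}
    (hKU : ∀ i, K i < U) [hKn : ∀ i, (K i).Normal]
    (hchief : ∀ i, ∀ Z : Subgroup H, Z.Normal → K i < Z → Z < U → False)
    (hC2 : ∀ i, ¬ (⨅ j ∈ ({i}ᶜ : Set ι), K j) ≤ K i) (i : ι)
    (a : U ⧸ (K i).subgroupOf U) :
    ∃ u : U, (∀ j, j ≠ i → (u : H) ∈ K j) ∧ QuotientGroup.mk u = a := by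
  obtain ⟨w, rfl⟩ := QuotientGroup.mk_surjective a
  set N := (⨅ j ∈ ({i}ᶜ : Set ι), K j) ⊓ U
  have : N.Normal :=
    normal_inf_normal _ _ (hH := normal_iInf_normal fun j => normal_iInf_normal fun _ => hKn j)
  have hsup : N ⊔ K i = U :=
    sup_eq_of_chief (hKU i).le (hchief i) inf_le_right (iInf_compl_inf_not_le hKU (hC2 i))
  obtain ⟨n, hn, c, hc, hnc⟩ := mem_sup_of_normal_right.mp (hsup.ge w.2)
  refine ⟨⟨n, (mem_inf.mp hn).2⟩, fun j hj => (iInf₂_le j hj : _ ≤ K j) (mem_inf.mp hn).1, ?_⟩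
  rw [QuotientGroup.eq, mem_subgroupOf]
  simpa [← hnc] using hc

theorem diagonalQuotientMap_surjective [Finite ι] {U : Subgroup H} [U.Normal]
    {K : ι → Subgroup H} (hKU : ∀ i, K i < U) [∀ i, (K i).Normal]
    (hchief : ∀ i, ∀ Z : Subgroup H, Z.Normal → K i < Z → Z < U → False)
    (hC2 : ∀ i, ¬ (⨅ j ∈ ({i}ᶜ : Set ι), K j) ≤ K i) :
    Function.Surjective (diagonalQuotientMap U K) := by
  classical
  refine MonoidHom.range_eq_top.mp (eq_top_iff.mpr fun y _ => pi_mem_of_mulSingle_mem y fun i => ?_)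
  obtain ⟨u, hu, hui⟩ := exists_mk_eq_and_mem_of_ne hKU hchief hC2 i (y i)
  refine ⟨u, funext fun j => ?_⟩
  by_cases hji : j = i
  · subst hji
    simpa [diagonalQuotientMap] using hui
  · simpa [diagonalQuotientMap, hji, QuotientGroup.eq_one_iff, mem_subgroupOf] using hu j hji

end Subgroup

theorem diagonal_iso_of_chief_factors_general {H : Type*} [Group H]
    (U : Subgroup H) (hU : U.Normal) (k : ℕ) (K : Fin k → Subgroup H)
    (hKU : ∀ i, K i < U)
    (hKnormal : ∀ i, (K i).Normal)
    (hchief : ∀ i, ∀ Z : Subgroup H, Z.Normal → K i < Z → Z < U → False)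
    (hC2 : ∀ i, ¬ ((⨅ j ∈ ({i}ᶜ : Set (Fin k)), K j) ≤ K i)) :
    Function.Surjective
      (Pi.monoidHom (fun i : Fin k =>
        QuotientGroup.mk' ((K i).subgroupOf U)) : ↥U →* Π i, ↥U ⧸ (K i).subgroupOf U) ∧
    (Pi.monoidHom (fun i : Fin k =>
        QuotientGroup.mk' ((K i).subgroupOf U))).ker = (⨅ i, K i).subgroupOf U :=
  ⟨Subgroup.diagonalQuotientMap_surjective hKU hchief hC2,
    Subgroup.ker_diagonalQuotientMap U K⟩

/-- Let `H` be a finite group with a normal subgroup `U` and `K 0, …, K (k-1) ≤ U`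
distinct normal subgroups of `H` such that each `U/K i` is a chief factor of `H`.
If no `K i` contains the intersection of the others, then the diagonal
homomorphism `U → ∏ i, U / K i` is surjective with kernel `⨅ i, K i`,
inducing an isomorphism `U / (⨅ i, K i) ≅ ∏ i, U / K i`. -/
theorem diagonal_iso_of_chief_factors {H : Type*} [Group H] [Finite H]
    (U : Subgroup H) (hU : U.Normal) (k : ℕ) (K : Fin k → Subgroup H)
    (hinj : Function.Injective K)
    (hKU : ∀ i, K i < U)
    (hKnormal : ∀ i, (K i).Normal)
    (hchief : ∀ i, ∀ Z : Subgroup H, Z.Normal → K i < Z → Z < U → False)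
    (hC2 : ∀ i, ¬ ((⨅ j ∈ ({i}ᶜ : Set (Fin k)), K j) ≤ K i)) :
    Function.Surjective
      (Pi.monoidHom (fun i : Fin k =>
        QuotientGroup.mk' ((K i).subgroupOf U)) : ↥U →* Π i, ↥U ⧸ (K i).subgroupOf U) ∧
    (Pi.monoidHom (fun i : Fin k =>
        QuotientGroup.mk' ((K i).subgroupOf U))).ker = (⨅ i, K i).subgroupOf U :=
  diagonal_iso_of_chief_factors_general U hU k K hKU hKnormal hchief hC2
end

section
/- Let H be a finite group with a normal subgroup U, and let K_1, …, K_k ≤ U be distinct normal subgroups of H such that each U/K_i is a nonabelian chief factor of H. Then for each i, K_i does not contain ∩_{j≠i} K_j. -/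
/-!
Fix `i` and write `K = K i`. Since `U/K` is a nonabelian chief factor, `U = ⁅U, U⁆ K`, and every
other `K j` satisfies `U = K j K`. If normal subgroups `A`, `B` satisfy `U ≤ A K` and `U ≤ B K`,
then `U = ⁅U, U⁆ K ≤ ⁅A K, B K⁆ K = ⁅A, B⁆ K ≤ (A ⊓ B) K`. By induction `U ≤ (⋂_{j ≠ i} K j) K`,
which is impossible if `⋂_{j ≠ i} K j ≤ K < U`.
-/

namespace Subgroup

variable {G : Type*} [Group G]

theorem mul_comm_of_commutator_le {U K : Subgroup G} [K.Normal] (h : ⁅U, U⁆ ≤ K)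
    (a b : U ⧸ K.subgroupOf U) : a * b = b * a := by
  have : IsMulCommutative (U ⧸ K.subgroupOf U) :=
    Normal.quotient_commutative_iff_commutator_le.mpr <| map_le_iff_le_comap.mp <|
      U.map_subtype_commutator ▸ h
  exact mul_comm' a b

theorem commutator_sup_normal_le (A B K : Subgroup G) [K.Normal] :
    ⁅A ⊔ K, B ⊔ K⁆ ≤ ⁅A, B⁆ ⊔ K := by
  have map_sup_self : ∀ C : Subgroup G, (C ⊔ K).map (QuotientGroup.mk' K) = C.map _ := fun C => by
    rw [map_sup, QuotientGroup.map_mk'_self, sup_bot_eq]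
  calc ⁅A ⊔ K, B ⊔ K⁆ ≤ (⁅A, B⁆.map (QuotientGroup.mk' K)).comap (QuotientGroup.mk' K) :=
        map_le_iff_le_comap.mp <| by rw [map_commutator, map_sup_self, map_sup_self, map_commutator]
    _ = ⁅A, B⁆ ⊔ K := by rw [comap_map_eq, QuotientGroup.ker_mk']

variable {U K : Subgroup G} [K.Normal]

theorem le_inf_sup_of_le_sup {A B : Subgroup G} [A.Normal] [B.Normal] (hU : U ≤ ⁅U, U⁆ ⊔ K)
    (hA : U ≤ A ⊔ K) (hB : U ≤ B ⊔ K) : U ≤ A ⊓ B ⊔ K :=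
  calc U ≤ ⁅U, U⁆ ⊔ K := hU
    _ ≤ ⁅A ⊔ K, B ⊔ K⁆ ⊔ K := sup_le_sup_right (commutator_mono hA hB) K
    _ ≤ ⁅A, B⁆ ⊔ K := sup_le (commutator_sup_normal_le A B K) le_sup_right
    _ ≤ A ⊓ B ⊔ K := sup_le_sup_right (commutator_le_inf A B) K

theorem le_finsetInf_sup_of_le_sup {ι : Type*} {s : Finset ι} {N : ι → Subgroup G}
    (hN : ∀ j, (N j).Normal) (hU : U ≤ ⁅U, U⁆ ⊔ K) (hs : ∀ j ∈ s, U ≤ N j ⊔ K) :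
    U ≤ s.inf N ⊔ K := by
  refine (Finset.inf_induction (p := fun X : Subgroup G => X.Normal ∧ U ≤ X ⊔ K)
    ⟨normal_top, le_top.trans le_sup_left⟩ ?_ fun j hj => ⟨hN j, hs j hj⟩).2
  rintro X ⟨hXn, hX⟩ Y ⟨hYn, hY⟩
  exact ⟨normal_inf_normal X Y, le_inf_sup_of_le_sup hU hX hY⟩

end Subgroup

open Subgroup in
theorem not_le_inter_of_nonabelian_chief_factors_general {H : Type*} [Group H]
    (U : Subgroup H) (hU : U.Normal) (k : ℕ) (K : Fin k → Subgroup H)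
    (hinj : Function.Injective K)
    (hKU : ∀ i, K i < U)
    (hKnormal : ∀ i, (K i).Normal)
    (hchief : ∀ i, ∀ Z : Subgroup H, Z.Normal → K i < Z → Z < U → False)
    (hnonab : ∀ i, ¬ ∀ a b : ↥U ⧸ (K i).subgroupOf U, a * b = b * a) :
    ∀ i, ¬ ((⨅ j ∈ ({i}ᶜ : Set (Fin k)), K j) ≤ K i) := by
  intro i hle
  have eq_of_lt {Z : Subgroup H} (hZ : Z.Normal) (hKZ : K i < Z) (hZU : Z ≤ U) : Z = U :=
    hZU.lt_or_eq.resolve_left (hchief i Z hZ hKZ)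
  have hperfect : U ≤ ⁅U, U⁆ ⊔ K i := by
    refine (eq_of_lt inferInstance (lt_of_le_not_ge le_sup_right fun h => hnonab i ?_)
      (sup_le (commutator_le_self U) (hKU i).le)).ge
    exact mul_comm_of_commutator_le (le_sup_left.trans h)
  have hsupp : ∀ j ∈ ({i}ᶜ : Finset (Fin k)), U ≤ K j ⊔ K i := by
    intro j hj
    have hji : ¬ K j ≤ K i := fun h => hchief j (K i) (hKnormal i)
      (lt_of_le_of_ne h fun e => Finset.mem_compl.mp hj (Finset.mem_singleton.mpr (hinj e))) (hKU i)
    rw [sup_comm]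
    exact (eq_of_lt inferInstance (lt_of_le_not_ge le_sup_left fun h => hji (le_sup_right.trans h))
      (sup_le (hKU i).le (hKU j).le)).ge
  have hinf : ({i}ᶜ : Finset (Fin k)).inf K ≤ K i := by
    simpa [Finset.inf_eq_iInf] using hle
  exact (hKU i).not_ge <|
    (le_finsetInf_sup_of_le_sup hKnormal hperfect hsupp).trans (sup_le hinf le_rfl)

/-- Let `H` be a finite group with a normal subgroup `U` and `K 0, …, K (k-1) ≤ U`
distinct normal subgroups of `H` such that each `U/K i` is a nonabelian chief
factor of `H`. Then no `K i` contains the intersection of the other `K j`. -/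
theorem not_le_inter_of_nonabelian_chief_factors {H : Type*} [Group H] [Finite H]
    (U : Subgroup H) (hU : U.Normal) (k : ℕ) (K : Fin k → Subgroup H)
    (hinj : Function.Injective K)
    (hKU : ∀ i, K i < U)
    (hKnormal : ∀ i, (K i).Normal)
    (hchief : ∀ i, ∀ Z : Subgroup H, Z.Normal → K i < Z → Z < U → False)
    (hnonab : ∀ i, ¬ ∀ a b : ↥U ⧸ (K i).subgroupOf U, a * b = b * a) :
    ∀ i, ¬ ((⨅ j ∈ ({i}ᶜ : Set (Fin k)), K j) ≤ K i) :=
  not_le_inter_of_nonabelian_chief_factors_general U hU k K hinj hKU hKnormal hchief hnonab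
end

section
/- Let V = V_1 ⊕ ⋯ ⊕ V_m be a finite-dimensional vector space over a field F decomposed as a direct sum of subspaces, and let T_1, …, T_s : V → V be bijective linear maps each permuting the set {V_1, …, V_m} of summands in such a way that T_i(V_j) ≠ V_j for all i, j. Then dim ker(1 + T_1 + ⋯ + T_s) ≤ (s/(s+1)) · dim V. -/
/-- Combinatorial lemma: a digraph on `Fin m` given by `s` fixed-point-free functions has an
induced "topologically sortable" subset carrying at least `1/(s+1)` of the total weight. -/
lemma aux_acyclic_subset {m s : ℕ} (σ : Fin s → Fin m → Fin m) (hσ : ∀ i j, σ i j ≠ j)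
    (w : Fin m → ℕ) (X : Finset (Fin m)) :
    ∃ (B : Finset (Fin m)) (g : Fin m → ℕ), B ⊆ X ∧
      (∀ j ∈ B, ∀ i, σ i j ∈ B → g j < g (σ i j)) ∧
      ∑ j ∈ X, w j ≤ (s + 1) * ∑ j ∈ B, w j := by
  classical
  induction X using Finset.strongInduction with
  | _ X ih =>
  rcases X.eq_empty_or_nonempty with rfl | hX
  · exact ⟨∅, fun _ => 0, by simp, by simp, by simp⟩
  obtain ⟨v, hvX, hvmax⟩ := X.exists_max_image w hX
  set N : Finset (Fin m) := insert v (Finset.image (fun i => σ i v) Finset.univ) with hN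
  have hvN : v ∈ N := Finset.mem_insert_self _ _
  have hssub : X \ N ⊂ X :=
    (Finset.ssubset_iff_of_subset Finset.sdiff_subset).mpr ⟨v, hvX, by simp [hvN]⟩
  obtain ⟨B', g', hB'sub, hg', hw'⟩ := ih (X \ N) hssub
  have hvB' : v ∉ B' := fun h => (Finset.mem_sdiff.mp (hB'sub h)).2 hvN
  refine ⟨insert v B', Function.update g' v (B'.sup g' + 1),
    Finset.insert_subset hvX (hB'sub.trans Finset.sdiff_subset), ?_, ?_⟩
  · intro j hj i hij
    rcases Finset.mem_insert.mp hj with rfl | hjB'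
    · rcases Finset.mem_insert.mp hij with h | h
      · exact absurd h (hσ i j)
      · refine absurd (Finset.mem_sdiff.mp (hB'sub h)).2 (fun hc => hc ?_)
        exact Finset.mem_insert.mpr (Or.inr (Finset.mem_image.mpr ⟨i, Finset.mem_univ i, rfl⟩))
    · have hjv : j ≠ v := fun h => hvB' (h ▸ hjB')
      rcases Finset.mem_insert.mp hij with h | h
      · rw [h, Function.update_self, Function.update_of_ne hjv]
        exact Nat.lt_succ_of_le (Finset.le_sup hjB')
      · have hsv : σ i j ≠ v := fun hc => hvB' (hc ▸ h)
        rw [Function.update_of_ne hjv, Function.update_of_ne hsv]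
        exact hg' j hjB' i h
  · have hcardN : N.card ≤ s + 1 := by
      refine (Finset.card_insert_le _ _).trans ?_
      have h1 : (Finset.image (fun i => σ i v) Finset.univ).card ≤ s :=
        (Finset.card_image_le).trans (by simp)
      omega
    have hsplit : ∑ j ∈ X, w j = ∑ j ∈ X \ N, w j + ∑ j ∈ X ∩ N, w j := by
      rw [← Finset.sdiff_inter_self_left X N]
      exact (Finset.sum_sdiff Finset.inter_subset_left).symm
    have hinter : ∑ j ∈ X ∩ N, w j ≤ (s + 1) * w v := by
      calc ∑ j ∈ X ∩ N, w j ≤ ∑ _j ∈ X ∩ N, w v :=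
            Finset.sum_le_sum fun j hj => hvmax j (Finset.mem_inter.mp hj).1
        _ = (X ∩ N).card * w v := by rw [Finset.sum_const, smul_eq_mul]
        _ ≤ (s + 1) * w v :=
            Nat.mul_le_mul_right _ ((Finset.card_le_card Finset.inter_subset_right).trans hcardN)
    calc ∑ j ∈ X, w j = ∑ j ∈ X \ N, w j + ∑ j ∈ X ∩ N, w j := hsplit
      _ ≤ (s + 1) * ∑ j ∈ B', w j + (s + 1) * w v := Nat.add_le_add hw' hinter
      _ = (s + 1) * (w v + ∑ j ∈ B', w j) := by ring
      _ = (s + 1) * ∑ j ∈ insert v B', w j := by rw [Finset.sum_insert hvB']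

/-- Let `V = V_1 ⊕ ⋯ ⊕ V_m` be a finite-dimensional vector space decomposed as an
internal direct sum of subspaces, and let `T_1, …, T_s` be bijective linear maps
each sending every summand `V_j` to a summand different from `V_j`.  Then
`dim ker (1 + T_1 + ⋯ + T_s) ≤ (s/(s+1)) · dim V`. -/
theorem finrank_ker_one_add_sum_le {F W : Type*} [Field F] [AddCommGroup W]
    [Module F W] [FiniteDimensional F W] (m : ℕ) (V : Fin m → Submodule F W)
    (hV : DirectSum.IsInternal V) (s : ℕ) (hs : 1 ≤ s)
    (T : Fin s → (W ≃ₗ[F] W))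
    (hperm : ∀ i j, ∃ j', j' ≠ j ∧ Submodule.map (T i).toLinearMap (V j) = V j') :
    (Module.finrank F
        (LinearMap.ker (LinearMap.id + ∑ i, (T i).toLinearMap : W →ₗ[F] W)) : ℝ) ≤
      (s / (s + 1) : ℝ) * Module.finrank F W := by
  classical
  choose σ hσne hσmap using hperm
  set e := LinearEquiv.ofBijective (DirectSum.coeLinearMap V) hV with he
  set π : Fin m → W →ₗ[F] W := fun j =>
    (V j).subtype ∘ₗ (DirectSum.component F (Fin m) (fun j => V j) j) ∘ₗ
      e.symm.toLinearMap with hπ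
  have hπ_apply : ∀ j x, π j x = ((e.symm x) j : W) := fun j x => rfl
  have hπ_mem : ∀ j x, π j x ∈ V j := fun j x => (e.symm x j).2
  have hcoe : ∀ y : DirectSum (Fin m) (fun j => V j), DirectSum.coeLinearMap V y = e y := fun y => rfl
  have hπ_sum : ∀ x, ∑ j, π j x = x := by
    intro x
    calc ∑ j, π j x
        = ∑ j, DirectSum.coeLinearMap V (DirectSum.of (fun j => V j) j ((e.symm x) j)) := by
          simp only [hπ_apply, DirectSum.coeLinearMap_of]
      _ = DirectSum.coeLinearMap V (∑ j, DirectSum.of (fun j => V j) j ((e.symm x) j)) :=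
          (map_sum _ _ _).symm
      _ = x := by rw [DirectSum.sum_univ_of, hcoe, e.apply_symm_apply]
  have hπ_zero : ∀ {j l : Fin m} {x : W}, x ∈ V l → l ≠ j → π j x = 0 := by
    intro j l x hx hlj
    have h := hV.ofBijective_coeLinearMap_of_mem_ne hlj hx
    rw [← he] at h
    rw [hπ_apply, h, ZeroMemClass.coe_zero]
  set w : Fin m → ℕ := fun j => Module.finrank F (V j) with hw
  obtain ⟨B, g, -, hg, hwB⟩ := aux_acyclic_subset σ hσne w Finset.univ
  set S : W →ₗ[F] W := (LinearMap.id + ∑ i, (T i).toLinearMap) with hS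
  set K := LinearMap.ker S with hK
  -- Key: an element of `K` vanishing on all components outside `B` is zero.
  have key : ∀ v : W, v ∈ K → (∀ j, j ∉ B → π j v = 0) → v = 0 := by
    intro v hv h0
    have hveq : ∀ j, π j v + ∑ i, π j ((T i).toLinearMap v) = 0 := by
      intro j
      have h1 : v + ∑ i, (T i).toLinearMap v = 0 := by
        have h2 : S v = 0 := LinearMap.mem_ker.mp hv
        simpa [hS, LinearMap.add_apply, LinearMap.sum_apply] using h2
      have h2 := congrArg (π j) h1
      rw [map_add, map_sum, map_zero] at h2
      exact h2
    have main : ∀ n, ∀ j, g j < n → π j v = 0 := by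
      intro n
      induction n with
      | zero => exact fun j hj => absurd hj (Nat.not_lt_zero _)
      | succ n ihn =>
        intro j hj
        by_cases hjB : j ∈ B
        · have h3 : ∀ i, π j ((T i).toLinearMap v) = 0 := by
            intro i
            have h4 : π j ((T i).toLinearMap v)
                = ∑ l, π j ((T i).toLinearMap (π l v)) := by
              conv_lhs => rw [← hπ_sum v]
              rw [map_sum, map_sum]
            rw [h4]
            refine Finset.sum_eq_zero fun l _ => ?_
            by_cases hlj : σ i l = j
            · have hπl : π l v = 0 := by
                by_cases hlB : l ∈ B
                · refine ihn l ?_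
                  have h5 : σ i l ∈ B := by rw [hlj]; exact hjB
                  have h6 := hg l hlB i h5
                  rw [hlj] at h6
                  omega
                · exact h0 l hlB
              rw [hπl, map_zero, map_zero]
            · refine hπ_zero ?_ hlj
              exact (hσmap i l) ▸ Submodule.mem_map_of_mem (hπ_mem l v)
          have h7 := hveq j
          simp only [h3, Finset.sum_const_zero, add_zero] at h7
          exact h7
        · exact h0 j hjB
    have hall : ∀ j, π j v = 0 := fun j => main (g j + 1) j (Nat.lt_succ_self _)
    calc v = ∑ j, π j v := (hπ_sum v).symm
      _ = 0 := by simp [hall]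
  -- the injection of `K` into the product of the summands outside `B`
  set φ : K →ₗ[F] ((j : {x // x ∈ Bᶜ}) → V j.1) :=
    LinearMap.pi (fun j => ((π j.1).comp K.subtype).codRestrict (V j.1)
      (fun x => hπ_mem j.1 x)) with hφ
  have hinj : Function.Injective φ := by
    rw [← LinearMap.ker_eq_bot, LinearMap.ker_eq_bot']
    intro x hx
    have h0 : ∀ j, j ∉ B → π j (x : W) = 0 := by
      intro j hjB
      have h1 := congrFun hx ⟨j, Finset.mem_compl.mpr hjB⟩
      exact Subtype.ext_iff.mp h1
    exact Subtype.ext (key (x : W) x.2 h0)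
  have hdim : Module.finrank F K ≤ ∑ j ∈ Bᶜ, w j := by
    have h1 := LinearMap.finrank_le_finrank_of_injective hinj
    rw [Module.finrank_pi_fintype] at h1
    rwa [← Finset.sum_coe_sort Bᶜ w]
  have htot : Module.finrank F W = ∑ j, w j := by
    rw [← e.finrank_eq]
    exact Module.finrank_directSum _ _
  have hsplitw : ∑ j ∈ B, w j + ∑ j ∈ Bᶜ, w j = ∑ j, w j := Finset.sum_add_sum_compl B w
  -- final arithmetic
  have h1 : (0:ℝ) < (s:ℝ) + 1 := by positivity
  rw [htot, div_mul_eq_mul_div, le_div_iff₀ h1]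
  have c1 : ((∑ j, w j : ℕ) : ℝ) ≤ ((s:ℝ) + 1) * (∑ j ∈ B, w j : ℕ) := by
    have := hwB
    push_cast
    exact_mod_cast this
  have c2 : ((∑ j ∈ B, w j : ℕ) : ℝ) + ((∑ j ∈ Bᶜ, w j : ℕ) : ℝ) = ((∑ j, w j : ℕ) : ℝ) := by
    exact_mod_cast congrArg (Nat.cast : ℕ → ℝ) hsplitw
  have c3 : ((Module.finrank F K : ℕ) : ℝ) ≤ ((∑ j ∈ Bᶜ, w j : ℕ) : ℝ) := by
    exact_mod_cast hdim
  nlinarith [mul_le_mul_of_nonneg_right c3 (le_of_lt h1)]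
end

section
/- Let G be a group, U a normal subgroup of G, K a normal subgroup of G contained in U with U/K abelian. Then U/K has a complement in G/K if and only if there is a group homomorphism φ : G → G/K such that φ(y) ≡ yK modulo U/K for all y ∈ G and U ⊆ ker φ. -/
/-! A complement `Θ` of a normal subgroup `N` of `Q` is mapped isomorphically onto `Q ⧸ N`, so
`Q → Q ⧸ N ≃ Θ ↪ Q` is an endomorphism `r` with `r q ≡ q mod N` killing `N`; conversely the range
of such an `r` is a complement of `N`. For `Q = G ⧸ K` and `N = U/K`, a homomorphism on `G` killing
`U` is the same as one on `G ⧸ K` killing `U/K`, because `K ≤ U`. -/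

namespace Subgroup

variable {Q : Type*} [Group Q] {N : Subgroup Q}

theorem inf_range_eq_bot_of_retraction {r : Q →* Q} (hr : ∀ q, r q * q⁻¹ ∈ N)
    (hN : N ≤ r.ker) : r.range ⊓ N = ⊥ := by
  refine eq_bot_iff.mpr ?_
  rintro _ ⟨⟨q, rfl⟩, hrq⟩
  have hq : q ∈ N := by simpa using mul_mem (inv_mem (hr q)) hrq
  exact hN hq

theorem range_sup_eq_top_of_retraction {r : Q →* Q} (hr : ∀ q, r q * q⁻¹ ∈ N) :
    r.range ⊔ N = ⊤ := by
  refine eq_top_iff.mpr fun q _ => ?_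
  have hq : q = (r q * q⁻¹)⁻¹ * r q := by group
  rw [hq]
  exact mul_mem (mem_sup_right (inv_mem (hr q))) (mem_sup_left ⟨q, rfl⟩)

variable [N.Normal]

theorem isComplement'_of_inf_eq_bot_of_sup_eq_top {Θ : Subgroup Q} (hinf : Θ ⊓ N = ⊥)
    (hsup : Θ ⊔ N = ⊤) : Θ.IsComplement' N :=
  isComplement'_of_disjoint_and_mul_eq_univ (disjoint_iff.mpr hinf)
    (by rw [← mul_normal, hsup, coe_top])

theorem IsComplement'.exists_retraction {Θ : Subgroup Q} (h : Θ.IsComplement' N) :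
    ∃ r : Q →* Q, (∀ q, r q * q⁻¹ ∈ N) ∧ N ≤ r.ker := by
  refine ⟨Θ.subtype.comp (h.QuotientMulEquiv.toMonoidHom.comp (QuotientGroup.mk' N)), ?_, ?_⟩
  · intro q
    rw [← QuotientGroup.eq_one_iff, QuotientGroup.mk_mul, QuotientGroup.mk_inv, mul_inv_eq_one]
    exact h.QuotientMulEquiv.symm_apply_apply (q : Q ⧸ N)
  · intro n hn
    change ((h.QuotientMulEquiv (n : Q ⧸ N) : Θ) : Q) = 1
    rw [(QuotientGroup.eq_one_iff n).mpr hn, map_one, OneMemClass.coe_one]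

theorem exists_complement_iff_exists_retraction :
    (∃ Θ : Subgroup Q, Θ ⊓ N = ⊥ ∧ Θ ⊔ N = ⊤) ↔
      ∃ r : Q →* Q, (∀ q, r q * q⁻¹ ∈ N) ∧ N ≤ r.ker :=
  ⟨fun ⟨_, hinf, hsup⟩ => (isComplement'_of_inf_eq_bot_of_sup_eq_top hinf hsup).exists_retraction,
    fun ⟨_, hr, hN⟩ =>
      ⟨_, inf_range_eq_bot_of_retraction hr hN, range_sup_eq_top_of_retraction hr⟩⟩

end Subgroup

theorem complement_iff_retraction_general {G : Type*} [Group G] (U K : Subgroup G)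
    (hU : U.Normal) (hK : K.Normal) (hKU : K ≤ U) :
    (∃ Θ : Subgroup (G ⧸ K),
        Θ ⊓ U.map (QuotientGroup.mk' K) = ⊥ ∧
        Θ ⊔ U.map (QuotientGroup.mk' K) = ⊤) ↔
      ∃ φ : G →* G ⧸ K,
        (∀ y : G, φ y * (QuotientGroup.mk' K y)⁻¹ ∈ U.map (QuotientGroup.mk' K)) ∧
        ∀ u ∈ U, φ u = 1 := by
  have := hU.map _ (QuotientGroup.mk'_surjective K)
  rw [Subgroup.exists_complement_iff_exists_retraction]
  constructor
  · rintro ⟨r, hr, hker⟩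
    exact ⟨r.comp (QuotientGroup.mk' K), fun y => hr _, fun u hu => hker ⟨u, hu, rfl⟩⟩
  · rintro ⟨φ, hφ, hker⟩
    refine ⟨QuotientGroup.lift K φ fun k hk => hker k (hKU hk), ?_, ?_⟩
    · rintro ⟨y⟩
      exact hφ y
    · rintro _ ⟨u, hu, rfl⟩
      exact hker u hu

/-- Let `G` be a group with normal subgroups `K ≤ U` such that `U/K` is abelian.
Then `U/K` has a complement in `G/K` if and only if there is a homomorphism
`φ : G → G/K` with `φ(y) ≡ yK mod U/K` for all `y ∈ G` and `U ⊆ ker φ`. -/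
theorem complement_iff_retraction {G : Type*} [Group G] (U K : Subgroup G)
    (hU : U.Normal) (hK : K.Normal) (hKU : K ≤ U)
    (hab : ∀ a b : G, a ∈ U → b ∈ U → a * b * a⁻¹ * b⁻¹ ∈ K) :
    (∃ Θ : Subgroup (G ⧸ K),
        Θ ⊓ U.map (QuotientGroup.mk' K) = ⊥ ∧
        Θ ⊔ U.map (QuotientGroup.mk' K) = ⊤) ↔
      ∃ φ : G →* G ⧸ K,
        (∀ y : G, φ y * (QuotientGroup.mk' K y)⁻¹ ∈ U.map (QuotientGroup.mk' K)) ∧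
        ∀ u ∈ U, φ u = 1 :=
  complement_iff_retraction_general U K hU hK hKU
end
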